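/- arXiv:1703.09113 — 2 statements merged into one kernel-verified Lean document; each statement's English description precedes it below -/
import Mathlib

section
/- Let 𝔴 = i_1⋯i_k be a nonempty acyclic word and p ∈ {1,2,3}. If p occurs among the letters of 𝔴 and t is the largest index with i_t = p, then β_p(𝔴) = s_{i_1}⋯s_{i_{t-1}}(α_p). If p does not occur in 𝔴, then β_p(𝔴) = -α_p. (In particular, if 𝔴 = 𝔲jk then β_k(𝔴) = s_𝔲 s_j(α_k).) -/
open MvPolynomial

noncomputable section

abbrev Vec3 := Fin 3 → ℤ

/-- The symmetric Cartan matrix entries determined by `c12, c13, c23`. -/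
def cart (c12 c13 c23 : ℤ) (p q : Fin 3) : ℤ :=
  if p = q then 2
  else if (p = 0 ∧ q = 1) ∨ (p = 1 ∧ q = 0) then -c12
  else if (p = 0 ∧ q = 2) ∨ (p = 2 ∧ q = 0) then -c13
  else -c23

/-- Off-diagonal positive entries `c_pq`. -/
def cOf (c12 c13 c23 : ℤ) (p q : Fin 3) : ℤ :=
  if (p = 0 ∧ q = 1) ∨ (p = 1 ∧ q = 0) then c12
  else if (p = 0 ∧ q = 2) ∨ (p = 2 ∧ q = 0) then c13
  else c23

/-- standard basis vectors α_p of ℤ^3 -/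
def alpha (p : Fin 3) : Vec3 := Pi.single p 1

/-- the symmetric bilinear form with (α_p, α_q) given by the Cartan matrix -/
def bform (c12 c13 c23 : ℤ) (v w : Vec3) : ℤ :=
  ∑ p, ∑ q, v p * cart c12 c13 c23 p q * w q

/-- simple reflection s_p -/
def srefl (c12 c13 c23 : ℤ) (p : Fin 3) (v : Vec3) : Vec3 :=
  v - (bform c12 c13 c23 v (alpha p)) • alpha p

/-- s_𝔴 for a word 𝔴 = i₁⋯i_k : the composite s_{i₁}∘⋯∘s_{i_k} -/
def sWord (c12 c13 c23 : ℤ) (w : List (Fin 3)) (v : Vec3) : Vec3 :=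
  w.foldr (fun p u => srefl c12 c13 c23 p u) v

open Fin.NatCast in
/-- a word is acyclic if it is a prefix of 123123⋯ (letters 0,1,2 here) or of 321321⋯ -/
def Acyclic (w : List (Fin 3)) : Prop :=
  (∀ t < w.length, w.getD t 0 = (t : Fin 3)) ∨
  (∀ t < w.length, w.getD t 0 = -((t : Fin 3) + 1))

/-- the length of the longest acyclic prefix -/
def rho (w : List (Fin 3)) : ℕ :=
  @Nat.findGreatest (fun p => Acyclic (w.take p)) (Classical.decPred _) w.length

/-- initial exchange matrix -/
def B0 (c12 c13 c23 : ℤ) : Matrix (Fin 3) (Fin 3) ℤ :=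
  !![0, c12, c13; -c12, 0, c23; -c13, -c23, 0]

/-- matrix mutation μ_k -/
def mutMat (k : Fin 3) (b : Matrix (Fin 3) (Fin 3) ℤ) : Matrix (Fin 3) (Fin 3) ℤ :=
  Matrix.of fun p q =>
    if p = k ∨ q = k then - b p q
    else b p q + (b p k).sign * max (b p k * b k q) 0

/-- mutated exchange matrix B(𝔴) -/
def BW (c12 c13 c23 : ℤ) (w : List (Fin 3)) : Matrix (Fin 3) (Fin 3) ℤ :=
  w.foldl (fun m k => mutMat k m) (B0 c12 c13 c23)

/-- c_pq(𝔴) = |b_pq(𝔴)| -/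
def cW (c12 c13 c23 : ℤ) (w : List (Fin 3)) (p q : Fin 3) : ℤ :=
  |BW c12 c13 c23 w p q|

/-- the ambient field F, the fraction field of ℚ[x₁,x₂,x₃] -/
abbrev FF := FractionRing (MvPolynomial (Fin 3) ℚ)

/-- the initial cluster variables x_p inside F -/
def xv (p : Fin 3) : FF := algebraMap (MvPolynomial (Fin 3) ℚ) FF (X p)

/-- seed mutation on the cluster -/
def mutClus (k : Fin 3) (b : Matrix (Fin 3) (Fin 3) ℤ) (z : Fin 3 → FF) : Fin 3 → FF :=
  fun p =>
    if p = k then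
      ((∏ q, z q ^ (max (b q k) 0).toNat) + (∏ q, z q ^ (max (-(b q k)) 0).toNat)) / z k
    else z p

/-- seed mutation -/
def mutSeed (s : Matrix (Fin 3) (Fin 3) ℤ × (Fin 3 → FF)) (k : Fin 3) :
    Matrix (Fin 3) (Fin 3) ℤ × (Fin 3 → FF) :=
  (mutMat k s.1, mutClus k s.1 s.2)

/-- the seed Ξ(𝔴) obtained from the initial seed by mutating along 𝔴 -/
def Xi (c12 c13 c23 : ℤ) (w : List (Fin 3)) : Matrix (Fin 3) (Fin 3) ℤ × (Fin 3 → FF) :=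
  w.foldl mutSeed (B0 c12 c13 c23, xv)

open Classical in
/-- the order of vanishing of z ∈ F at the prime x_q : the unique m with
    z = x_q^m · f/g, f,g prime to x_q (0 if no such m, e.g. z = 0). -/
def ordAt (q : Fin 3) (z : FF) : ℤ :=
  if h : ∃ m : ℤ, ∃ f g : MvPolynomial (Fin 3) ℚ, ¬ (X q ∣ f) ∧ ¬ (X q ∣ g) ∧ g ≠ 0 ∧
      z = (xv q) ^ m * (algebraMap (MvPolynomial (Fin 3) ℚ) FF f) /
            (algebraMap (MvPolynomial (Fin 3) ℚ) FF g)
  then h.choose else 0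

/-- the denominator vector β_p(𝔴) of the p-th cluster variable of Ξ(𝔴) -/
def betaP (c12 c13 c23 : ℤ) (w : List (Fin 3)) (p : Fin 3) : Vec3 :=
  fun q => - ordAt q ((Xi c12 c13 c23 w).2 p)

abbrev V2 := ℤ × ℤ

def Vbase (p : Fin 3) : V2 × V2 × V2 :=
  if p = 0 then ((-1,2), (-1,1), (0,1))
  else if p = 1 then ((0,1), (1,1), (1,0))
  else ((1,0), (1,-1), (2,-1))

def Vstep (t : V2 × V2 × V2) (p : Fin 3) : V2 × V2 × V2 :=
  if p = 0 then (t.2.1 + t.2.2, t.2.1, t.2.2)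
  else if p = 1 then (t.1, t.1 + t.2.2, t.2.2)
  else (t.1, t.2.1, t.1 + t.2.1)

/-- the triple V(𝔴) = (v₁(𝔴), v₂(𝔴), v₃(𝔴)) -/
def VW : List (Fin 3) → V2 × V2 × V2
  | [] => ((0,0),(0,0),(0,0))
  | i :: r => r.foldl Vstep (Vbase i)

/-- the component v_p(𝔴) of V(𝔴) -/
def vComp (p : Fin 3) (t : V2 × V2 × V2) : V2 :=
  if p = 0 then t.1 else if p = 1 then t.2.1 else t.2.2

/-- (b,c) is generic: b ≠ 0, c ≠ 0, b + c ≠ 0 -/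
def Generic (v : V2) : Prop := v.1 ≠ 0 ∧ v.2 ≠ 0 ∧ v.1 + v.2 ≠ 0

/-- (b,c) is primitive: gcd(|b|,|c|) = 1 -/
def Primitive (v : V2) : Prop := Int.gcd v.1 v.2 = 1

/-- the crossing times ℓ/|n|, ℓ = 1, …, |n|-1, tagged with a letter -/
def marks (n : ℤ) (letter : Fin 3) : List (ℚ × Fin 3) :=
  ((List.range n.natAbs).drop 1).map (fun ℓ => ((ℓ : ℚ) / (n.natAbs : ℚ), letter))

/-- the crossing word υ(b,c) of the segment from (0,0) to (b,c) : letters recorded at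
    the crossings with the lines y ∈ ℤ (letter 1), x+y ∈ ℤ (letter 2), x ∈ ℤ (letter 3),
    listed in increasing order of the time parameter. -/
def upsWord (b c : ℤ) : List (Fin 3) :=
  ((marks c 0 ++ marks (b + c) 1 ++ marks b 2).mergeSort (fun s t => s.1 ≤ t.1)).map Prod.snd

/-- β(b,c) = s_{j₁}⋯s_{j_h}(α_{j_{h+1}}) where υ(b,c) = j₁⋯j_{2h+1} -/
def betaVec (c12 c13 c23 : ℤ) (v : V2) : Vec3 :=
  sWord c12 c13 c23 ((upsWord v.1 v.2).take ((upsWord v.1 v.2).length / 2))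
    (alpha ((upsWord v.1 v.2).getD ((upsWord v.1 v.2).length / 2) 0))

/-- φ(𝔳) = β(v_p(𝔳)) where p is the last letter of 𝔳 -/
def phi (c12 c13 c23 : ℤ) (w : List (Fin 3)) : Vec3 :=
  betaVec c12 c13 c23 (vComp (w.getLastD 0) (VW w))

/-- ψ(ŵ), where ŵ = 𝔴𝔳 with 𝔴 the longest acyclic prefix of ŵ -/
def psi (c12 c13 c23 : ℤ) (w : List (Fin 3)) : Vec3 :=
  if w.drop (rho w) = [] then
    sWord c12 c13 c23 (w.take (rho w)).dropLast (alpha ((w.take (rho w)).getLastD 0))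
  else
    sWord c12 c13 c23 (w.take (rho w)) (phi c12 c13 c23 (w.drop (rho w)))


/-- the word (ab)^n : n copies of the two-letter word ab -/
def rep2 (a b : Fin 3) (n : ℕ) : List (Fin 3) := (List.replicate n [a, b]).flatten

/-!
Along an acyclic word `ℓ = 123123⋯` (or `321321⋯`) every mutation happens at a source or a sink:
the exchange matrix only changes by flipping the signs of one row and column, so the letters
`ℓ n, ℓ (n + 1), ℓ (n + 2)` always form an acyclic quiver with the original weights, and each
exchange relation reads `z' z = 1 + z_a ^ c * z_b ^ c'`.

Every cluster variable therefore has a presentation `x^a f / (x^b g)` with `f, g` polynomials with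
nonnegative coefficients not divisible by any variable; such presentations are stable under
products, inverses and `1 + ·` (no cancellation can occur), and they show that `d = b - a` is the
denominator vector. Along the exchange relation `d` evolves tropically:
`d' = max (c d_a + c' d_b, 0) - d`.

Starting from `-α_{ℓ 0}, -α_{ℓ 1}, -α_{ℓ 2}`, the roots `γ_n = s_{ℓ 0} ⋯ s_{ℓ (n - 1)} α_{ℓ n}`
satisfy this recursion: the reflection identity
`s_i s_j s_k α_i = -α_i + c_ij s_i α_j + c_ik s_i s_j α_k` gives
`γ_{n+3} = -γ_n + c γ_{n+1} + c' γ_{n+2}`, which keeps the `γ_n` nonnegative and increasing when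
all weights are at least `1`, so the `max` is harmless from the third step on.
-/

namespace MvPolynomial

section Semiring

variable {σ R : Type*} [CommSemiring R]

theorem X_dvd_iff_coeff {i : σ} {f : MvPolynomial σ R} :
    X i ∣ f ↔ ∀ m : σ →₀ ℕ, m i = 0 → f.coeff m = 0 := by
  rw [X_dvd_iff_modMonomial_eq_zero, MvPolynomial.ext_iff]
  refine forall_congr' fun m => ?_
  by_cases hm : m i = 0
  · rw [coeff_modMonomial_of_not_le _ (by simp [Finsupp.single_le_iff, hm])]
    simp [hm]
  · rw [coeff_modMonomial_of_le _ (by simpa [Finsupp.single_le_iff, Nat.one_le_iff_ne_zero])]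
    simp [hm]

theorem monomial_one_add (u v : σ →₀ ℕ) :
    monomial (u + v) (1 : R) = monomial u 1 * monomial v 1 := by
  rw [monomial_mul, one_mul]

theorem not_X_dvd_iff_exists_coeff {i : σ} {f : MvPolynomial σ R} :
    ¬ X i ∣ f ↔ ∃ m : σ →₀ ℕ, m i = 0 ∧ f.coeff m ≠ 0 := by
  simp [X_dvd_iff_coeff]

end Semiring

variable {σ R : Type*} [CommRing R] [LinearOrder R] [IsStrictOrderedRing R]

variable (σ R) in
def nonnegCoeffs : Subsemiring (MvPolynomial σ R) where
  carrier := {f | ∀ m, 0 ≤ f.coeff m}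
  mul_mem' {f g} hf hg m := by
    classical
    rw [coeff_mul]
    exact Finset.sum_nonneg fun x _ => mul_nonneg (hf _) (hg _)
  one_mem' m := by
    classical
    rw [coeff_one]
    split_ifs <;> simp
  add_mem' {f g} hf hg m := by
    rw [coeff_add]
    exact add_nonneg (hf m) (hg m)
  zero_mem' m := by simp

theorem monomial_one_mem_nonnegCoeffs (a : σ →₀ ℕ) : monomial a (1 : R) ∈ nonnegCoeffs σ R := by
  classical
  intro m
  rw [coeff_monomial]
  split_ifs <;> simp

theorem not_X_dvd_add {i : σ} {f g : MvPolynomial σ R} (hf : f ∈ nonnegCoeffs σ R)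
    (hg : g ∈ nonnegCoeffs σ R) (hfi : ¬ X i ∣ f) : ¬ X i ∣ f + g := by
  rw [not_X_dvd_iff_exists_coeff] at hfi ⊢
  obtain ⟨m, hm, hfm⟩ := hfi
  refine ⟨m, hm, ?_⟩
  rw [coeff_add]
  exact (add_pos_of_pos_of_nonneg ((hf m).lt_of_ne' hfm) (hg m)).ne'

theorem not_X_dvd_monomial_one_mul {i : σ} {u : σ →₀ ℕ} {f : MvPolynomial σ R} (hu : u i = 0)
    (hf : ¬ X i ∣ f) : ¬ X i ∣ monomial u 1 * f := fun h =>
  (X_prime.dvd_or_dvd h).elim (by simp [X_dvd_monomial, hu]) hf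

def IsPosPrimitive (f : MvPolynomial σ R) : Prop :=
  f ∈ nonnegCoeffs σ R ∧ ∀ i, ¬ X i ∣ f

namespace IsPosPrimitive

theorem one : IsPosPrimitive (1 : MvPolynomial σ R) :=
  ⟨one_mem _, fun _ => X_prime.not_dvd_one⟩

theorem ne_zero [Nonempty σ] {f : MvPolynomial σ R} (hf : IsPosPrimitive f) : f ≠ 0 := by
  rintro rfl
  exact hf.2 (Classical.arbitrary σ) (dvd_zero _)

theorem mul {f g : MvPolynomial σ R} (hf : IsPosPrimitive f) (hg : IsPosPrimitive g) :
    IsPosPrimitive (f * g) :=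
  ⟨mul_mem hf.1 hg.1, fun i h => (X_prime.dvd_or_dvd h).elim (hf.2 i) (hg.2 i)⟩

theorem pow {f : MvPolynomial σ R} (hf : IsPosPrimitive f) (n : ℕ) : IsPosPrimitive (f ^ n) := by
  induction n with
  | zero => simpa using one
  | succ n ih => simpa [pow_succ] using ih.mul hf

/-- The coefficients being nonnegative, no cancellation can occur in the sum. -/
theorem monomial_mul_add {f g : MvPolynomial σ R} (hf : IsPosPrimitive f) (hg : IsPosPrimitive g)
    {u v : σ →₀ ℕ} (huv : ∀ i, u i = 0 ∨ v i = 0) :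
    IsPosPrimitive (monomial u 1 * f + monomial v 1 * g) := by
  have hu := mul_mem (monomial_one_mem_nonnegCoeffs u) hf.1
  have hv := mul_mem (monomial_one_mem_nonnegCoeffs v) hg.1
  refine ⟨add_mem hu hv, fun i => ?_⟩
  rcases huv i with h | h
  · exact not_X_dvd_add hu hv (not_X_dvd_monomial_one_mul h (hf.2 i))
  · rw [add_comm]
    exact not_X_dvd_add hv hu (not_X_dvd_monomial_one_mul h (hg.2 i))

end IsPosPrimitive

end MvPolynomial

local notation "ι" => algebraMap (MvPolynomial (Fin 3) ℚ) FF

theorem algebraMap_ne_zero {f : MvPolynomial (Fin 3) ℚ} (hf : f ≠ 0) : ι f ≠ 0 :=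
  IsFractionRing.to_map_ne_zero_of_mem_nonZeroDivisors (mem_nonZeroDivisors_of_ne_zero hf)

theorem xv_ne_zero (q : Fin 3) : xv q ≠ 0 := algebraMap_ne_zero (X_ne_zero q)

theorem eq_of_xv_zpow_mul_div_eq {q : Fin 3} {m₁ m₂ : ℤ} {f₁ g₁ f₂ g₂ : MvPolynomial (Fin 3) ℚ}
    (hf₁ : ¬ X q ∣ f₁) (hg₁ : g₁ ≠ 0) (hg₂ : ¬ X q ∣ g₂) (hle : m₁ ≤ m₂)
    (h : xv q ^ m₁ * ι f₁ / ι g₁ = xv q ^ m₂ * ι f₂ / ι g₂) : m₁ = m₂ := by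
  obtain ⟨k, rfl⟩ : ∃ k : ℕ, m₂ = m₁ + k := ⟨(m₂ - m₁).toNat, by omega⟩
  have hg₂0 : g₂ ≠ 0 := by rintro rfl; exact hg₂ (dvd_zero _)
  have hpoly : f₁ * g₂ = X q ^ k * f₂ * g₁ := by
    apply IsFractionRing.injective (MvPolynomial (Fin 3) ℚ) FF
    rw [zpow_add₀ (xv_ne_zero q), zpow_natCast,
      div_eq_div_iff (algebraMap_ne_zero hg₁) (algebraMap_ne_zero hg₂0)] at h
    have hx : xv q ^ m₁ ≠ 0 := zpow_ne_zero _ (xv_ne_zero q)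
    simp only [map_mul, map_pow, show ι (X q) = xv q from rfl]
    exact mul_left_cancel₀ hx (by linear_combination h)
  by_contra hk
  have hXk : X q ∣ f₁ * g₂ := by
    rw [hpoly, mul_assoc]
    exact (dvd_pow_self _ (by omega)).mul_right _
  exact (X_prime.dvd_or_dvd hXk).elim hf₁ hg₂

theorem ordAt_eq_of_eq {q : Fin 3} {z : FF} {m : ℤ} {f g : MvPolynomial (Fin 3) ℚ}
    (hf : ¬ X q ∣ f) (hg : ¬ X q ∣ g) (hz : z = xv q ^ m * ι f / ι g) : ordAt q z = m := by
  have hg0 : g ≠ 0 := by rintro rfl; exact hg (dvd_zero _)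
  have hex : ∃ m' : ℤ, ∃ f' g' : MvPolynomial (Fin 3) ℚ, ¬ X q ∣ f' ∧ ¬ X q ∣ g' ∧ g' ≠ 0 ∧
      z = xv q ^ m' * ι f' / ι g' := ⟨m, f, g, hf, hg, hg0, hz⟩
  classical
  rw [ordAt, dif_pos hex]
  obtain ⟨f', g', hf', hg', hg0', hz'⟩ := hex.choose_spec
  rcases le_total hex.choose m with hle | hle
  · exact eq_of_xv_zpow_mul_div_eq hf' hg0' hg hle (hz'.symm.trans hz)
  · exact (eq_of_xv_zpow_mul_div_eq hf hg0 hg' hle (hz.symm.trans hz')).symm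

/-- Presentations of this kind survive the exchange relations, and for them `d` is the
denominator vector of `z` (`HasDenomVector.ordAt_eq`). -/
def HasDenomVector (d : Vec3) (z : FF) : Prop :=
  ∃ (a b : Fin 3 →₀ ℕ) (f g : MvPolynomial (Fin 3) ℚ), IsPosPrimitive f ∧ IsPosPrimitive g ∧
    (∀ i, d i = b i - a i) ∧ z = ι (monomial a 1 * f) / ι (monomial b 1 * g)

namespace HasDenomVector

variable {d d' : Vec3} {z z' : FF}

theorem ordAt_eq (h : HasDenomVector d z) (q : Fin 3) : ordAt q z = -d q := by
  obtain ⟨a, b, f, g, hf, hg, hd, rfl⟩ := h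
  have split (e : Fin 3 →₀ ℕ) : monomial e (1 : ℚ) = X q ^ e q * monomial (e.erase q) 1 := by
    rw [← monomial_single_add, Finsupp.single_add_erase]
  refine ordAt_eq_of_eq (not_X_dvd_monomial_one_mul (u := a.erase q) (by simp) (hf.2 q))
    (not_X_dvd_monomial_one_mul (u := b.erase q) (by simp) (hg.2 q)) ?_
  have hb : ι (monomial (b.erase q) 1 * g) ≠ 0 :=
    algebraMap_ne_zero (mul_ne_zero (by simp) hg.ne_zero)
  rw [hd q, split a, split b, neg_sub, zpow_sub₀ (xv_ne_zero q), zpow_natCast, zpow_natCast]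
  simp only [map_mul, map_pow, show ι (X q) = xv q from rfl]
  field_simp

theorem xv (p : Fin 3) : HasDenomVector (-alpha p) (xv p) := by
  refine ⟨Finsupp.single p 1, 0, 1, 1, .one, .one, fun i => ?_, by simp [_root_.xv, X]⟩
  rcases eq_or_ne i p with rfl | hi <;> simp [alpha, *]

theorem one : HasDenomVector 0 1 :=
  ⟨0, 0, 1, 1, .one, .one, fun i => by simp, by simp⟩

theorem mul (h : HasDenomVector d z) (h' : HasDenomVector d' z') :
    HasDenomVector (d + d') (z * z') := by
  obtain ⟨a, b, f, g, hf, hg, hd, rfl⟩ := h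
  obtain ⟨a', b', f', g', hf', hg', hd', rfl⟩ := h'
  refine ⟨a + a', b + b', f * f', g * g', hf.mul hf', hg.mul hg', fun i => ?_, ?_⟩
  · simp only [Pi.add_apply, hd, hd', Finsupp.add_apply]
    push_cast
    ring
  · rw [div_mul_div_comm, ← map_mul, ← map_mul, monomial_one_add, monomial_one_add]
    ring_nf

theorem pow (h : HasDenomVector d z) (n : ℕ) : HasDenomVector (n • d) (z ^ n) := by
  induction n with
  | zero => simpa using one
  | succ n ih => rw [pow_succ, succ_nsmul]; exact ih.mul h

theorem inv (h : HasDenomVector d z) : HasDenomVector (-d) z⁻¹ := by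
  obtain ⟨a, b, f, g, hf, hg, hd, rfl⟩ := h
  exact ⟨b, a, g, f, hg, hf, fun i => by simp [hd], (inv_div _ _)⟩

theorem one_add (h : HasDenomVector d z) : HasDenomVector d⁺ (1 + z) := by
  obtain ⟨a, b, f, g, hf, hg, hd, rfl⟩ := h
  refine ⟨a ⊓ b, b, monomial (b - a ⊓ b) 1 * g + monomial (a - a ⊓ b) 1 * f, g,
    hg.monomial_mul_add hf ?_, hg, fun i => ?_, ?_⟩
  · intro i
    simp only [Finsupp.tsub_apply, Finsupp.inf_apply]
    omega
  · simp only [Pi.posPart_apply, posPart_def, hd, Finsupp.inf_apply]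
    omega
  · have hb : ι (monomial b 1 * g) ≠ 0 :=
      algebraMap_ne_zero (mul_ne_zero (by simp) (hg.ne_zero))
    rw [one_add_div hb, ← map_add, mul_add, ← mul_assoc, ← mul_assoc, ← monomial_one_add,
      ← monomial_one_add, add_tsub_cancel_of_le inf_le_right, add_tsub_cancel_of_le inf_le_left]

theorem exchange {d₀ d₁ d₂ : Vec3} {z₀ z₁ z₂ : FF} (h₀ : HasDenomVector d₀ z₀)
    (h₁ : HasDenomVector d₁ z₁) (h₂ : HasDenomVector d₂ z₂) (c₁ c₂ : ℕ) :
    HasDenomVector ((c₁ • d₁ + c₂ • d₂)⁺ - d₀) ((1 + z₁ ^ c₁ * z₂ ^ c₂) / z₀) := by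
  rw [div_eq_mul_inv, sub_eq_add_neg]
  exact ((h₁.pow c₁).mul (h₂.pow c₂)).one_add.mul h₀.inv

end HasDenomVector

theorem Fin.three_eq_or_eq_or_eq {a b c : Fin 3} (hab : a ≠ b) (hac : a ≠ c) (hbc : b ≠ c)
    (p : Fin 3) : p = a ∨ p = b ∨ p = c := by
  revert a b c p
  decide

def prefixWord (ℓ : ℕ → Fin 3) (n : ℕ) : List (Fin 3) := (List.range n).map ℓ

theorem prefixWord_succ (ℓ : ℕ → Fin 3) (n : ℕ) :
    prefixWord ℓ (n + 1) = prefixWord ℓ n ++ [ℓ n] := by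
  simp [prefixWord, List.range_succ]

theorem length_prefixWord (ℓ : ℕ → Fin 3) (n : ℕ) : (prefixWord ℓ n).length = n := by
  simp [prefixWord]

theorem getD_prefixWord (ℓ : ℕ → Fin 3) {n t : ℕ} (ht : t < n) :
    (prefixWord ℓ n).getD t 0 = ℓ t := by
  simp [prefixWord, ht]

theorem take_prefixWord (ℓ : ℕ → Fin 3) {n t : ℕ} (ht : t ≤ n) :
    (prefixWord ℓ n).take t = prefixWord ℓ t := by
  simp [prefixWord, ← List.map_take, List.take_range, ht]

theorem mem_prefixWord {ℓ : ℕ → Fin 3} {n : ℕ} {p : Fin 3} :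
    p ∈ prefixWord ℓ n ↔ ∃ t < n, ℓ t = p := by
  simp [prefixWord]

theorem eq_prefixWord_of_getD_eq {ℓ : ℕ → Fin 3} {w : List (Fin 3)}
    (hw : ∀ t < w.length, w.getD t 0 = ℓ t) : w = prefixWord ℓ w.length :=
  List.ext_getElem (length_prefixWord ℓ _).symm fun t h _ => by
    rw [← List.getD_eq_getElem _ 0 h, hw t h]
    simp [prefixWord]

theorem Xi_prefixWord_succ (c12 c13 c23 : ℤ) (ℓ : ℕ → Fin 3) (n : ℕ) :
    Xi c12 c13 c23 (prefixWord ℓ (n + 1)) = mutSeed (Xi c12 c13 c23 (prefixWord ℓ n)) (ℓ n) := by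
  simp [Xi, prefixWord_succ, List.foldl_append]

/-- `ℓ` is the infinite word `123123⋯` up to a relabelling of the letters. -/
structure IsCyclicWord (ℓ : ℕ → Fin 3) : Prop where
  periodic : Function.Periodic ℓ 3
  succ_ne : ∀ n, ℓ (n + 1) ≠ ℓ n

namespace IsCyclicWord

variable {ℓ : ℕ → Fin 3} (hℓ : IsCyclicWord ℓ)
include hℓ

theorem add_two_ne (n : ℕ) : ℓ (n + 2) ≠ ℓ n := fun h =>
  hℓ.succ_ne (n + 2) ((hℓ.periodic n).trans h.symm)

theorem eq_or_eq_or_eq (n : ℕ) (p : Fin 3) : p = ℓ n ∨ p = ℓ (n + 1) ∨ p = ℓ (n + 2) :=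
  Fin.three_eq_or_eq_or_eq (hℓ.succ_ne n).symm (hℓ.add_two_ne n).symm (hℓ.succ_ne (n + 1)).symm p

theorem prod_univ_eq {M : Type*} [CommMonoid M] (n : ℕ) (g : Fin 3 → M) :
    ∏ q, g q = g (ℓ n) * g (ℓ (n + 1)) * g (ℓ (n + 2)) := by
  have hsurj : Function.Surjective fun i : Fin 3 => ℓ (n + i) := fun p => by
    rcases hℓ.eq_or_eq_or_eq n p with rfl | rfl | rfl
    exacts [⟨0, rfl⟩, ⟨1, rfl⟩, ⟨2, rfl⟩]
  rw [← Fintype.prod_bijective _ (Finite.injective_iff_surjective.mpr hsurj).bijective_of_finite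
    (fun i => g (ℓ (n + i))) g (fun _ => rfl), Fin.prod_univ_three]
  rfl

end IsCyclicWord

/-- The exchange matrix `E` is that of the acyclic quiver in which the letters `ℓ n, ℓ (n + 1),
ℓ (n + 2)` come in this order (`ε = 1`) or in the reverse order (`ε = -1`), with weights `C`. -/
structure IsOrientedAt (C : Fin 3 → Fin 3 → ℤ) (ε : ℤ) (ℓ : ℕ → Fin 3) (n : ℕ)
    (E : Matrix (Fin 3) (Fin 3) ℤ) : Prop where
  skew : ∀ p q, E q p = -E p q
  apply_zero_one : E (ℓ n) (ℓ (n + 1)) = ε * C (ℓ n) (ℓ (n + 1))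
  apply_zero_two : E (ℓ n) (ℓ (n + 2)) = ε * C (ℓ n) (ℓ (n + 2))
  apply_one_two : E (ℓ (n + 1)) (ℓ (n + 2)) = ε * C (ℓ (n + 1)) (ℓ (n + 2))

theorem mutMat_apply_of_mul_nonpos {k p q : Fin 3} {E : Matrix (Fin 3) (Fin 3) ℤ} (hp : p ≠ k)
    (hq : q ≠ k) (h : E p k * E k q ≤ 0) : mutMat k E p q = E p q := by
  simp [mutMat, hp, hq, max_eq_right h]

namespace IsOrientedAt

variable {C : Fin 3 → Fin 3 → ℤ} {ε : ℤ} {ℓ : ℕ → Fin 3} {n : ℕ} {E : Matrix (Fin 3) (Fin 3) ℤ}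
  (hℓ : IsCyclicWord ℓ)

include hℓ in
theorem apply_left_of_ne (h : IsOrientedAt C ε ℓ n E) {q : Fin 3} (hq : q ≠ ℓ n) :
    E (ℓ n) q = ε * C (ℓ n) q := by
  rcases hℓ.eq_or_eq_or_eq n q with rfl | rfl | rfl
  exacts [absurd rfl hq, h.apply_zero_one, h.apply_zero_two]

include hℓ in
theorem mutMat (h : IsOrientedAt C ε ℓ n E) (hC : ∀ p q, C p q = C q p)
    (hC₀ : ∀ p q, 0 ≤ C p q) : IsOrientedAt C ε ℓ (n + 1) (_root_.mutMat (ℓ n) E) := by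
  have hflip {p q : Fin 3} (hp : p ≠ ℓ n) (hq : q ≠ ℓ n) : _root_.mutMat (ℓ n) E p q = E p q := by
    refine mutMat_apply_of_mul_nonpos hp hq ?_
    rw [h.skew, h.apply_left_of_ne hℓ hp, h.apply_left_of_ne hℓ hq]
    nlinarith [mul_nonneg (sq_nonneg ε) (mul_nonneg (hC₀ (ℓ n) p) (hC₀ (ℓ n) q))]
  have hlast {p : Fin 3} (hp : p ≠ ℓ n) :
      _root_.mutMat (ℓ n) E p (ℓ (n + 1 + 2)) = ε * C p (ℓ (n + 1 + 2)) := by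
    rw [show ℓ (n + 1 + 2) = ℓ n from hℓ.periodic n, _root_.mutMat, Matrix.of_apply,
      if_pos (Or.inr rfl), ← h.skew, h.apply_left_of_ne hℓ hp, hC]
  refine ⟨fun p q => ?_, ?_, hlast (hℓ.succ_ne n), hlast (hℓ.add_two_ne n)⟩
  · by_cases hpq : p = ℓ n ∨ q = ℓ n
    · simp only [_root_.mutMat, Matrix.of_apply, if_pos hpq, if_pos hpq.symm, h.skew p q]
    · rw [not_or] at hpq
      rw [hflip hpq.2 hpq.1, hflip hpq.1 hpq.2, h.skew]
  · rw [hflip (hℓ.succ_ne n) (hℓ.add_two_ne n)]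
    exact h.apply_one_two

include hℓ in
/-- Since `ℓ n` is a source or a sink, one of the two monomials of the exchange relation is `1`. -/
theorem mutClus_self (h : IsOrientedAt C ε ℓ n E) (hε : ε = 1 ∨ ε = -1) (hC₀ : ∀ p q, 0 ≤ C p q)
    (z : Fin 3 → FF) :
    mutClus (ℓ n) E z (ℓ n) = (1 + z (ℓ (n + 1)) ^ (C (ℓ n) (ℓ (n + 1))).toNat *
      z (ℓ (n + 2)) ^ (C (ℓ n) (ℓ (n + 2))).toNat) / z (ℓ n) := by
  have h₀ : E (ℓ n) (ℓ n) = 0 := by linarith [h.skew (ℓ n) (ℓ n)]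
  have h₁ : E (ℓ (n + 1)) (ℓ n) = -(ε * C (ℓ n) (ℓ (n + 1))) := by rw [h.skew, h.apply_zero_one]
  have h₂ : E (ℓ (n + 2)) (ℓ n) = -(ε * C (ℓ n) (ℓ (n + 2))) := by rw [h.skew, h.apply_zero_two]
  have hmax : ∀ p q, max (-C p q) 0 = 0 := fun p q => max_eq_right (neg_nonpos.2 (hC₀ p q))
  rw [mutClus, if_pos rfl, hℓ.prod_univ_eq n, hℓ.prod_univ_eq n, h₀, h₁, h₂]
  rcases hε with rfl | rfl
  · simp [hmax, max_eq_left (hC₀ _ _)]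
  · simp [hmax, max_eq_left (hC₀ _ _), add_comm]

end IsOrientedAt

/-- `δ k` is meant to be the denominator vector of the `k`-th cluster variable met along `ℓ`:
`x_{ℓ k}` for `k < 3`, then the variable created by the mutation at `ℓ (k - 3)`. -/
structure IsDenomSeq (C : Fin 3 → Fin 3 → ℤ) (ℓ : ℕ → Fin 3) (δ : ℕ → Vec3) : Prop where
  initial : ∀ k < 3, δ k = -alpha (ℓ k)
  exchange : ∀ n, δ (n + 3) =
    (C (ℓ n) (ℓ (n + 1)) • δ (n + 1) + C (ℓ n) (ℓ (n + 2)) • δ (n + 2))⁺ - δ n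

section Seeds

variable {c12 c13 c23 : ℤ} {C : Fin 3 → Fin 3 → ℤ} {ε : ℤ} {ℓ : ℕ → Fin 3}
  (hℓ : IsCyclicWord ℓ)
  (hC : ∀ p q, C p q = C q p) (hC₀ : ∀ p q, 0 ≤ C p q)
  (hbase : IsOrientedAt C ε ℓ 0 (B0 c12 c13 c23))
include hℓ hC hC₀ hbase

theorem isOrientedAt_Xi (n : ℕ) :
    IsOrientedAt C ε ℓ n (Xi c12 c13 c23 (prefixWord ℓ n)).1 := by
  induction n with
  | zero => exact hbase
  | succ n ih =>
    rw [Xi_prefixWord_succ]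
    exact ih.mutMat hℓ hC hC₀

theorem hasDenomVector_Xi (hε : ε = 1 ∨ ε = -1) {δ : ℕ → Vec3} (hδ : IsDenomSeq C ℓ δ)
    (n k : ℕ) (hnk : n ≤ k) (hkn : k < n + 3) :
    HasDenomVector (δ k) ((Xi c12 c13 c23 (prefixWord ℓ n)).2 (ℓ k)) := by
  induction n generalizing k with
  | zero => rw [hδ.initial k hkn]; exact .xv (ℓ k)
  | succ n ih =>
    rw [Xi_prefixWord_succ]
    obtain rfl | hk := eq_or_ne k (n + 3)
    · have hsmul (p q : Fin 3) (d : Vec3) : (C p q).toNat • d = C p q • d := by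
        rw [← natCast_zsmul, Int.toNat_of_nonneg (hC₀ p q)]
      have hex := HasDenomVector.exchange (ih n le_rfl (by omega))
        (ih (n + 1) (by omega) (by omega)) (ih (n + 2) (by omega) (by omega))
        (C (ℓ n) (ℓ (n + 1))).toNat (C (ℓ n) (ℓ (n + 2))).toNat
      rw [hsmul, hsmul, ← hδ.exchange,
        ← (isOrientedAt_Xi hℓ hC hC₀ hbase n).mutClus_self hℓ hε hC₀] at hex
      rwa [mutSeed, hℓ.periodic n]
    · have hkn' : ℓ k ≠ ℓ n := by
        obtain rfl | rfl : k = n + 1 ∨ k = n + 2 := by omega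
        exacts [hℓ.succ_ne n, hℓ.add_two_ne n]
      simp only [mutSeed, mutClus, if_neg hkn']
      exact ih k (by omega) (by omega)

theorem betaP_prefixWord (hε : ε = 1 ∨ ε = -1) {δ : ℕ → Vec3} (hδ : IsDenomSeq C ℓ δ) {n k : ℕ}
    (hnk : n ≤ k) (hkn : k < n + 3) :
    betaP c12 c13 c23 (prefixWord ℓ n) (ℓ k) = δ k := funext fun q => by
  rw [betaP, (hasDenomVector_Xi hℓ hC hC₀ hbase hε hδ n k hnk hkn).ordAt_eq, neg_neg]

end Seeds

section Reflections

variable (c12 c13 c23 : ℤ)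

theorem cOf_comm (p q : Fin 3) : cOf c12 c13 c23 p q = cOf c12 c13 c23 q p := by
  fin_cases p <;> fin_cases q <;> rfl

theorem bform_alpha_alpha (p q : Fin 3) :
    bform c12 c13 c23 (alpha p) (alpha q) = if p = q then 2 else -cOf c12 c13 c23 p q := by
  fin_cases p <;> fin_cases q <;> simp [bform, alpha, Fin.sum_univ_three, cart, cOf]

theorem srefl_alpha_self (p : Fin 3) : srefl c12 c13 c23 p (alpha p) = -alpha p := by
  rw [srefl, bform_alpha_alpha, if_pos rfl, two_smul, sub_add_cancel_left]

theorem srefl_alpha_of_ne {p q : Fin 3} (h : p ≠ q) :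
    srefl c12 c13 c23 p (alpha q) = alpha q + cOf c12 c13 c23 p q • alpha p := by
  rw [srefl, bform_alpha_alpha, if_neg h.symm, cOf_comm, neg_smul, sub_neg_eq_add]

theorem bform_add_left (u v w : Vec3) :
    bform c12 c13 c23 (u + v) w = bform c12 c13 c23 u w + bform c12 c13 c23 v w := by
  simp only [bform, Pi.add_apply, add_mul, Finset.sum_add_distrib]

theorem srefl_add (p : Fin 3) (u v : Vec3) :
    srefl c12 c13 c23 p (u + v) = srefl c12 c13 c23 p u + srefl c12 c13 c23 p v := by
  rw [srefl, srefl, srefl, bform_add_left, add_smul]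
  abel

theorem bform_zsmul_left (a : ℤ) (u v : Vec3) :
    bform c12 c13 c23 (a • u) v = a * bform c12 c13 c23 u v := by
  simp only [bform, Finset.mul_sum, Pi.smul_apply, smul_eq_mul, mul_assoc]

theorem srefl_zsmul (p : Fin 3) (a : ℤ) (v : Vec3) :
    srefl c12 c13 c23 p (a • v) = a • srefl c12 c13 c23 p v := by
  rw [srefl, srefl, bform_zsmul_left, smul_sub, mul_smul]

theorem sWord_append (w w' : List (Fin 3)) (v : Vec3) :
    sWord c12 c13 c23 (w ++ w') v = sWord c12 c13 c23 w (sWord c12 c13 c23 w' v) :=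
  List.foldr_append

theorem sWord_add (w : List (Fin 3)) (u v : Vec3) :
    sWord c12 c13 c23 w (u + v) = sWord c12 c13 c23 w u + sWord c12 c13 c23 w v := by
  induction w with
  | nil => rfl
  | cons p w ih => exact (congrArg _ ih).trans (srefl_add c12 c13 c23 p _ _)

theorem sWord_zsmul (w : List (Fin 3)) (a : ℤ) (v : Vec3) :
    sWord c12 c13 c23 w (a • v) = a • sWord c12 c13 c23 w v := by
  induction w with
  | nil => rfl
  | cons p w ih => exact (congrArg _ ih).trans (srefl_zsmul c12 c13 c23 p _ _)

theorem sWord_append_singleton_alpha_self (w : List (Fin 3)) (p : Fin 3) :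
    sWord c12 c13 c23 (w ++ [p]) (alpha p) = -sWord c12 c13 c23 w (alpha p) := by
  rw [sWord_append, ← neg_one_zsmul, ← sWord_zsmul, neg_one_zsmul]
  exact congrArg _ (srefl_alpha_self c12 c13 c23 p)

theorem sWord_append_pair_alpha (w : List (Fin 3)) {i j k : Fin 3} (hik : i ≠ k) (hjk : j ≠ k) :
    sWord c12 c13 c23 (w ++ [i, j]) (alpha k) = sWord c12 c13 c23 w (alpha k) +
      cOf c12 c13 c23 i k • sWord c12 c13 c23 w (alpha i) +
      cOf c12 c13 c23 j k • sWord c12 c13 c23 (w ++ [i]) (alpha j) := by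
  rw [sWord_append, sWord_append]
  change sWord c12 c13 c23 w (srefl c12 c13 c23 i (srefl c12 c13 c23 j (alpha k))) = _
  rw [srefl_alpha_of_ne c12 c13 c23 hjk, srefl_add, srefl_zsmul, srefl_alpha_of_ne c12 c13 c23 hik,
    sWord_add, sWord_add, sWord_zsmul, sWord_zsmul]
  rfl

end Reflections

def rootSeq (c12 c13 c23 : ℤ) (ℓ : ℕ → Fin 3) : ℕ → Vec3
  | n + 3 => sWord c12 c13 c23 (prefixWord ℓ n) (alpha (ℓ n))
  | k => -alpha (ℓ k)

theorem alpha_nonneg (p : Fin 3) : 0 ≤ alpha p := Pi.single_nonneg.mpr zero_le_one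

section RootSeq

variable (c12 c13 c23 : ℤ) {ℓ : ℕ → Fin 3}

theorem rootSeq_of_lt_three {k : ℕ} (hk : k < 3) : rootSeq c12 c13 c23 ℓ k = -alpha (ℓ k) := by
  interval_cases k <;> rfl

theorem sWord_prefixWord_alpha_add_two (hper : Function.Periodic ℓ 3) (m : ℕ) :
    sWord c12 c13 c23 (prefixWord ℓ m) (alpha (ℓ (m + 2))) = -rootSeq c12 c13 c23 ℓ (m + 2) := by
  cases m with
  | zero => exact (neg_neg _).symm
  | succ m =>
    rw [prefixWord_succ, show ℓ (m + 1 + 2) = ℓ m from hper m,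
      sWord_append_singleton_alpha_self]
    rfl

theorem rootSeq_four (hne : ∀ n, ℓ (n + 1) ≠ ℓ n) :
    rootSeq c12 c13 c23 ℓ 4 = alpha (ℓ 1) + cOf c12 c13 c23 (ℓ 0) (ℓ 1) • alpha (ℓ 0) :=
  srefl_alpha_of_ne c12 c13 c23 (hne 0).symm

variable (hℓ : IsCyclicWord ℓ)
include hℓ

theorem rootSeq_add_five (m : ℕ) :
    rootSeq c12 c13 c23 ℓ (m + 5) = -rootSeq c12 c13 c23 ℓ (m + 2) +
      cOf c12 c13 c23 (ℓ m) (ℓ (m + 2)) • rootSeq c12 c13 c23 ℓ (m + 3) +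
      cOf c12 c13 c23 (ℓ (m + 1)) (ℓ (m + 2)) • rootSeq c12 c13 c23 ℓ (m + 4) := by
  change sWord c12 c13 c23 (prefixWord ℓ (m + 2)) _ = _
  rw [prefixWord_succ, prefixWord_succ, List.append_assoc, List.singleton_append,
    sWord_append_pair_alpha c12 c13 c23 _ (hℓ.add_two_ne m).symm (hℓ.succ_ne (m + 1)).symm,
    sWord_prefixWord_alpha_add_two c12 c13 c23 hℓ.periodic, ← prefixWord_succ]
  rfl

theorem rootSeq_nonneg_monotone (hc : ∀ p q, 1 ≤ cOf c12 c13 c23 p q) (n : ℕ) :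
    0 ≤ rootSeq c12 c13 c23 ℓ (n + 3) ∧
      rootSeq c12 c13 c23 ℓ (n + 3) ≤ rootSeq c12 c13 c23 ℓ (n + 4) ∧
      rootSeq c12 c13 c23 ℓ (n + 4) ≤ rootSeq c12 c13 c23 ℓ (n + 5) := by
  have hc₀ (p q : Fin 3) : 0 ≤ cOf c12 c13 c23 p q := zero_le_one.trans (hc p q)
  induction n with
  | zero =>
    have h₄ : 0 ≤ rootSeq c12 c13 c23 ℓ 4 := by
      rw [rootSeq_four c12 c13 c23 hℓ.succ_ne]
      exact add_nonneg (alpha_nonneg _) (smul_nonneg (hc₀ _ _) (alpha_nonneg _))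
    refine ⟨alpha_nonneg _, ?_, ?_⟩
    · rw [rootSeq_four c12 c13 c23 hℓ.succ_ne]
      exact le_add_of_nonneg_of_le (alpha_nonneg _)
        (le_smul_of_one_le_left (alpha_nonneg _) (hc _ _))
    · rw [rootSeq_add_five c12 c13 c23 hℓ 0]
      exact le_add_of_nonneg_of_le (add_nonneg (neg_nonneg.2 (neg_nonpos.2 (alpha_nonneg _)))
        (smul_nonneg (hc₀ _ _) (alpha_nonneg _))) (le_smul_of_one_le_left h₄ (hc _ _))
  | succ n ih =>
    obtain ⟨h₀, h₁, h₂⟩ := ih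
    refine ⟨h₀.trans h₁, h₂, ?_⟩
    rw [rootSeq_add_five c12 c13 c23 hℓ (n + 1), neg_add_eq_sub]
    exact le_add_of_nonneg_of_le (sub_nonneg.2 (h₁.trans (le_smul_of_one_le_left (h₀.trans h₁)
      (hc _ _)))) (le_smul_of_one_le_left ((h₀.trans h₁).trans h₂) (hc _ _))

theorem isDenomSeq_rootSeq (hc : ∀ p q, 1 ≤ cOf c12 c13 c23 p q) :
    IsDenomSeq (cOf c12 c13 c23) ℓ (rootSeq c12 c13 c23 ℓ) := by
  have hc₀ (p q : Fin 3) : 0 ≤ cOf c12 c13 c23 p q := zero_le_one.trans (hc p q)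
  refine ⟨fun _ hk => rootSeq_of_lt_three c12 c13 c23 hk, fun n => ?_⟩
  match n with
  | 0 =>
    have hneg (k : ℕ) (p q : Fin 3) : cOf c12 c13 c23 p q • -alpha (ℓ k) ≤ 0 :=
      smul_nonpos_of_nonneg_of_nonpos (hc₀ p q) (neg_nonpos.2 (alpha_nonneg _))
    change alpha (ℓ 0) = (cOf c12 c13 c23 (ℓ 0) (ℓ 1) • -alpha (ℓ 1) +
      cOf c12 c13 c23 (ℓ 0) (ℓ 2) • -alpha (ℓ 2))⁺ - -alpha (ℓ 0)
    rw [posPart_eq_zero.2 (add_nonpos (hneg 1 _ _) (hneg 2 _ _)), zero_sub, neg_neg]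
  | 1 =>
    rw [rootSeq_four c12 c13 c23 hℓ.succ_ne]
    change _ = (cOf c12 c13 c23 (ℓ 1) (ℓ 2) • -alpha (ℓ 2) +
      cOf c12 c13 c23 (ℓ 1) (ℓ 3) • alpha (ℓ 0))⁺ - -alpha (ℓ 1)
    rw [hℓ.periodic 0, cOf_comm c12 c13 c23 (ℓ 1) (ℓ 0)]
    ext r
    rcases eq_or_ne r (ℓ 2) with rfl | hr
    · have h₂₀ : ℓ 2 ≠ ℓ 0 := hℓ.add_two_ne 0
      simp [alpha, h₂₀, hℓ.succ_ne 1, hc₀]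
    · simp only [alpha, Pi.add_apply, Pi.sub_apply, Pi.smul_apply, Pi.neg_apply, Pi.posPart_apply,
        Pi.single_apply, hr, if_false, smul_eq_mul]
      split_ifs <;> simp [hc₀, add_comm]
  | m + 2 =>
    rw [rootSeq_add_five c12 c13 c23 hℓ, posPart_eq_self.2 (add_nonneg
      (smul_nonneg (hc₀ _ _) (rootSeq_nonneg_monotone c12 c13 c23 hℓ hc m).1)
      (smul_nonneg (hc₀ _ _) (rootSeq_nonneg_monotone c12 c13 c23 hℓ hc (m + 1)).1)),
      show ℓ (m + 2 + 1) = ℓ m from hℓ.periodic m,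
      show ℓ (m + 2 + 2) = ℓ (m + 1) from hℓ.periodic (m + 1),
      cOf_comm c12 c13 c23 (ℓ (m + 2)), cOf_comm c12 c13 c23 (ℓ (m + 2))]
    abel

end RootSeq

theorem B0_skew (c12 c13 c23 : ℤ) (p q : Fin 3) : B0 c12 c13 c23 q p = -B0 c12 c13 c23 p q := by
  fin_cases p <;> fin_cases q <;> simp [B0]

open Fin.NatCast in
theorem isCyclicWord_comp_natCast {f : Fin 3 → Fin 3} (hf : f.Injective) :
    IsCyclicWord fun t : ℕ => f t := by
  refine ⟨fun n => by simp, fun n => hf.ne ?_⟩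
  push_cast
  generalize (n : Fin 3) = x
  revert x
  decide

open Fin.NatCast in
theorem isOrientedAt_B0_natCast (c12 c13 c23 : ℤ) :
    IsOrientedAt (cOf c12 c13 c23) 1 (fun t : ℕ => (t : Fin 3)) 0 (B0 c12 c13 c23) :=
  by refine ⟨B0_skew c12 c13 c23, ?_, ?_, ?_⟩ <;> simp +decide [B0, cOf]

open Fin.NatCast in
theorem isOrientedAt_B0_neg_natCast (c12 c13 c23 : ℤ) :
    IsOrientedAt (cOf c12 c13 c23) (-1) (fun t : ℕ => -((t : Fin 3) + 1)) 0 (B0 c12 c13 c23) :=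
  by refine ⟨B0_skew c12 c13 c23, ?_, ?_, ?_⟩ <;> simp +decide [B0, cOf]

section Main

variable (c12 c13 c23 : ℤ) {ε : ℤ} {ℓ : ℕ → Fin 3} (hℓ : IsCyclicWord ℓ)
  (hc : ∀ p q, 1 ≤ cOf c12 c13 c23 p q) (hε : ε = 1 ∨ ε = -1)
  (hbase : IsOrientedAt (cOf c12 c13 c23) ε ℓ 0 (B0 c12 c13 c23))
include hℓ hc hε hbase

theorem betaP_prefixWord_eq_rootSeq {n k : ℕ} (hnk : n ≤ k) (hkn : k < n + 3) :
    betaP c12 c13 c23 (prefixWord ℓ n) (ℓ k) = rootSeq c12 c13 c23 ℓ k :=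
  betaP_prefixWord hℓ (cOf_comm c12 c13 c23) (fun p q => zero_le_one.trans (hc p q)) hbase hε
    (isDenomSeq_rootSeq c12 c13 c23 hℓ hc) hnk hkn

theorem betaP_prefixWord_of_last {n t : ℕ} (ht : t < n)
    (hlast : ∀ u, t < u → u < n → ℓ u ≠ ℓ t) :
    betaP c12 c13 c23 (prefixWord ℓ n) (ℓ t) =
      sWord c12 c13 c23 (prefixWord ℓ t) (alpha (ℓ t)) := by
  have hn : n ≤ t + 3 := by
    by_contra h
    exact hlast (t + 3) (by omega) (by omega) (hℓ.periodic t)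
  exact (congrArg _ (hℓ.periodic t).symm).trans
    (betaP_prefixWord_eq_rootSeq c12 c13 c23 hℓ hc hε hbase hn (by omega))

theorem betaP_prefixWord_of_not_mem {n : ℕ} {p : Fin 3} (hp : p ∉ prefixWord ℓ n) :
    betaP c12 c13 c23 (prefixWord ℓ n) p = -alpha p := by
  obtain ⟨i, hi, rfl⟩ : ∃ i < 3, ℓ (n + i) = p := by
    rcases hℓ.eq_or_eq_or_eq n p with h | h | h
    exacts [⟨0, by omega, h.symm⟩, ⟨1, by omega, h.symm⟩, ⟨2, by omega, h.symm⟩]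
  have hni : n + i < 3 := by
    by_contra h
    refine hp (mem_prefixWord.2 ⟨n + i - 3, by omega, ?_⟩)
    rw [← hℓ.periodic, show n + i - 3 + 3 = n + i by omega]
  rw [betaP_prefixWord_eq_rootSeq c12 c13 c23 hℓ hc hε hbase (by omega) (by omega),
    rootSeq_of_lt_three c12 c13 c23 hni]

theorem betaP_of_getD_eq {w : List (Fin 3)} (hw : ∀ t < w.length, w.getD t 0 = ℓ t) (p : Fin 3) :
    (∀ t, t < w.length → w.getD t 0 = p → (∀ u, t < u → u < w.length → w.getD u 0 ≠ p) →
        betaP c12 c13 c23 w p = sWord c12 c13 c23 (w.take t) (alpha p)) ∧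
    (p ∉ w → betaP c12 c13 c23 w p = -alpha p) := by
  obtain ⟨n, rfl⟩ : ∃ n, w = prefixWord ℓ n := ⟨_, eq_prefixWord_of_getD_eq hw⟩
  simp only [length_prefixWord]
  refine ⟨fun t ht htp hlast => ?_, betaP_prefixWord_of_not_mem c12 c13 c23 hℓ hc hε hbase⟩
  rw [getD_prefixWord ℓ ht] at htp
  subst htp
  rw [take_prefixWord ℓ ht.le]
  exact betaP_prefixWord_of_last c12 c13 c23 hℓ hc hε hbase ht fun u htu hun => by
    rw [← getD_prefixWord ℓ hun]
    exact hlast u htu hun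

end Main

theorem stmt1_general (c12 c13 c23 : ℤ) (h12 : 2 ≤ c12) (h13 : 2 ≤ c13) (h23 : 2 ≤ c23)
    (w : List (Fin 3)) (hA : Acyclic w) (p : Fin 3) :
    (∀ t, t < w.length → w.getD t 0 = p →
        (∀ u, t < u → u < w.length → w.getD u 0 ≠ p) →
        betaP c12 c13 c23 w p = sWord c12 c13 c23 (w.take t) (alpha p)) ∧
    (p ∉ w → betaP c12 c13 c23 w p = - alpha p) := by
  have hc : ∀ p q, 1 ≤ cOf c12 c13 c23 p q := by
    intro p q
    fin_cases p <;> fin_cases q <;> simp [cOf] <;> omega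
  rcases hA with hA | hA
  · exact betaP_of_getD_eq c12 c13 c23 (isCyclicWord_comp_natCast Function.injective_id) hc
      (Or.inl rfl) (isOrientedAt_B0_natCast c12 c13 c23) hA p
  · exact betaP_of_getD_eq c12 c13 c23
      (isCyclicWord_comp_natCast (f := fun x => -(x + 1)) (by decide)) hc
      (Or.inr rfl) (isOrientedAt_B0_neg_natCast c12 c13 c23) hA p

theorem stmt1 (c12 c13 c23 : ℤ) (h12 : 2 ≤ c12) (h13 : 2 ≤ c13) (h23 : 2 ≤ c23)
    (w : List (Fin 3)) (hne : w ≠ []) (hA : Acyclic w) (p : Fin 3) :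
    (∀ t, t < w.length → w.getD t 0 = p →
        (∀ u, t < u → u < w.length → w.getD u 0 ≠ p) →
        betaP c12 c13 c23 w p = sWord c12 c13 c23 (w.take t) (alpha p)) ∧
    (p ∉ w → betaP c12 c13 c23 w p = - alpha p) :=
  stmt1_general c12 c13 c23 h12 h13 h23 w hA p

end
end

section
/- For every word 𝔴, the mutated exchange matrix B(𝔴) is acyclic — meaning it is NOT the case that the three integers b_12(𝔴), b_23(𝔴), -b_13(𝔴) are all positive, and NOT the case that they are all negative — if and only if 𝔴 is the empty word, a prefix of the infinite periodic word 123123⋯, or a prefix of 321321⋯. -/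
open MvPolynomial

noncomputable section

/-!
Encode a skew-symmetric `3 × 3` matrix by its cyclic edge weights `u = (b₁₂, b₂₃, b₃₁)`.
Mutation at `k` negates the two weights `a`, `b` at `k` and subtracts `sgn a · max (a b) 0`
from the opposite weight `c`. This rule is equivariant under rotating the indices and under
`u ↦ -u`, and `B(𝔴)` is acyclic iff the three weights do not all have the same sign.

While `B(𝔴)` is acyclic, one weight has the sign opposite to the other two and all have absolute
value at least `2`. Mutating at an endpoint of this odd edge only moves the odd edge; mutating at
the opposite vertex makes all signs equal, with `|c|` becoming `|c| + |a b| > max |a| |b|`. Up to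
sign, a cyclic configuration whose weight opposite the last mutated vertex is the largest stays
so: the new opposite weight is `a b - c > max a b` since `c < max a b` and `a, b ≥ 2`. Along
`123123⋯` and `321321⋯` every letter hits an endpoint of the odd edge, while every other letter
allowed after a nonempty prefix of them hits the opposite vertex.
-/

def mutTerm (a b : ℤ) : ℤ := a.sign * max (a * b) 0

lemma mutTerm_comm (a b : ℤ) : mutTerm a b = mutTerm b a := by
  unfold mutTerm
  rcases le_or_gt (a * b) 0 with h | h
  · rw [mul_comm b a, max_eq_right h, mul_zero, mul_zero]
  · rw [mul_comm b a]
    rcases lt_trichotomy a 0 with ha | rfl | ha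
    · rw [Int.sign_eq_neg_one_of_neg ha, Int.sign_eq_neg_one_of_neg (by nlinarith)]
    · simp at h
    · rw [Int.sign_eq_one_of_pos ha, Int.sign_eq_one_of_pos (by nlinarith)]

lemma mutTerm_neg_neg (a b : ℤ) : mutTerm (-a) (-b) = -mutTerm a b := by
  simp [mutTerm]

lemma mutTerm_of_nonpos {a b : ℤ} (h : a * b ≤ 0) : mutTerm a b = 0 := by
  rw [mutTerm, max_eq_right h, mul_zero]

lemma mutTerm_of_pos {a b : ℤ} (ha : 0 < a) (hb : 0 < b) : mutTerm a b = a * b := by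
  rw [mutTerm, Int.sign_eq_one_of_pos ha, one_mul, max_eq_left (by positivity)]

lemma mutTerm_neg_right (a : ℤ) : mutTerm a (-a) = 0 :=
  mutTerm_of_nonpos (by rw [mul_neg]; exact neg_nonpos.mpr (mul_self_nonneg a))

lemma mutTerm_neg_left (a : ℤ) : mutTerm (-a) a = 0 := by
  rw [mutTerm_comm, mutTerm_neg_right]

-- `u i` is the weight of the edge from `i` to `i + 1`.
def ofEdges (u : Fin 3 → ℤ) : Matrix (Fin 3) (Fin 3) ℤ :=
  !![0, u 0, -u 2; -u 0, 0, u 1; u 2, -u 1, 0]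

def edgeMut (k : Fin 3) (u : Fin 3 → ℤ) : Fin 3 → ℤ :=
  fun i => if i = k + 1 then u i - mutTerm (u k) (u (k + 2)) else -u i

lemma edgeMut_apply_self (k : Fin 3) (u : Fin 3 → ℤ) : edgeMut k u k = -u k :=
  if_neg (by simp)

lemma edgeMut_apply_add_one (k : Fin 3) (u : Fin 3 → ℤ) :
    edgeMut k u (k + 1) = u (k + 1) - mutTerm (u k) (u (k + 2)) :=
  if_pos rfl

lemma edgeMut_apply_add_two (k : Fin 3) (u : Fin 3 → ℤ) : edgeMut k u (k + 2) = -u (k + 2) :=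
  if_neg (by simp)

lemma edgeMut_apply_of_ne {k i : Fin 3} (u : Fin 3 → ℤ) (hi : i ≠ k + 1) :
    edgeMut k u i = -u i :=
  if_neg hi

lemma mutMat_apply (k : Fin 3) (b : Matrix (Fin 3) (Fin 3) ℤ) (p q : Fin 3) :
    mutMat k b p q = if p = k ∨ q = k then -b p q else b p q + mutTerm (b p k) (b k q) :=
  rfl

lemma mutMat_ofEdges (k : Fin 3) (u : Fin 3 → ℤ) :
    mutMat k (ofEdges u) = ofEdges (edgeMut k u) := by
  ext p q
  fin_cases k <;> fin_cases p <;> fin_cases q <;>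
    simp [mutMat_apply, ofEdges, edgeMut, mutTerm_neg_neg, mutTerm_neg_right, mutTerm_neg_left,
      mutTerm_comm (u 2) (u 0), mutTerm_comm (u 0) (u 1), mutTerm_comm (u 1) (u 2), sub_eq_add_neg,
      add_comm]

lemma edgeMut_neg (k : Fin 3) (u : Fin 3 → ℤ) : edgeMut k (-u) = -edgeMut k u := by
  ext i
  simp only [edgeMut, Pi.neg_apply, mutTerm_neg_neg]
  split_ifs <;> ring

lemma B0_eq_ofEdges (c12 c13 c23 : ℤ) : B0 c12 c13 c23 = ofEdges ![c12, c23, -c13] := by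
  ext p q
  fin_cases p <;> fin_cases q <;> simp [B0, ofEdges]

lemma BW_eq_ofEdges (c12 c13 c23 : ℤ) (w : List (Fin 3)) :
    BW c12 c13 c23 w = ofEdges (w.foldl (fun u k => edgeMut k u) ![c12, c23, -c13]) := by
  suffices ∀ u, w.foldl (fun m k => mutMat k m) (ofEdges u) =
      ofEdges (w.foldl (fun u k => edgeMut k u) u) by
    rw [BW, B0_eq_ofEdges, this]
  induction w with
  | nil => exact fun _ => rfl
  | cons k w ih => exact fun u => by rw [List.foldl_cons, mutMat_ofEdges, ih]; rfl

def CyclicEdges (u : Fin 3 → ℤ) : Prop := (∀ i, 0 < u i) ∨ ∀ i, u i < 0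

lemma cyclicEdges_neg {u : Fin 3 → ℤ} : CyclicEdges (-u) ↔ CyclicEdges u := by
  simp only [CyclicEdges, Pi.neg_apply, neg_pos, neg_lt_zero]
  exact or_comm

def UpToSign (P : (Fin 3 → ℤ) → Prop) (u : Fin 3 → ℤ) : Prop := P u ∨ P (-u)

lemma upToSign_neg {P : (Fin 3 → ℤ) → Prop} {u : Fin 3 → ℤ} :
    UpToSign P (-u) ↔ UpToSign P u := by
  rw [UpToSign, UpToSign, neg_neg, or_comm]

lemma UpToSign.edgeMut {P Q : (Fin 3 → ℤ) → Prop} {k : Fin 3} {u : Fin 3 → ℤ}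
    (hu : UpToSign P u) (h : ∀ a, P a → UpToSign Q (edgeMut k a)) :
    UpToSign Q (edgeMut k u) := by
  rcases hu with hu | hu
  · exact h u hu
  · simpa only [edgeMut_neg, upToSign_neg] using h _ hu

def OddEdge (m : Fin 3) (a : Fin 3 → ℤ) : Prop := a m ≤ -2 ∧ ∀ i ≠ m, 2 ≤ a i

def Dominant (d : Fin 3) (a : Fin 3 → ℤ) : Prop := (∀ i, 2 ≤ a i) ∧ ∀ i ≠ d, a i < a d

lemma OddEdge.not_cyclicEdges {m : Fin 3} {a : Fin 3 → ℤ} (h : OddEdge m a) :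
    ¬ CyclicEdges a := by
  rintro (hpos | hneg)
  · exact absurd (hpos m) (by linarith [h.1])
  · exact absurd (hneg (m + 1)) (by linarith [h.2 (m + 1) (by simp)])

lemma Dominant.cyclicEdges {d : Fin 3} {a : Fin 3 → ℤ} (h : Dominant d a) : CyclicEdges a :=
  Or.inl fun i => by linarith [h.1 i]

lemma UpToSign.not_cyclicEdges {m : Fin 3} {u : Fin 3 → ℤ} (h : UpToSign (OddEdge m) u) :
    ¬ CyclicEdges u := by
  rcases h with h | h
  · exact h.not_cyclicEdges
  · exact cyclicEdges_neg.not.mp h.not_cyclicEdges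

lemma UpToSign.cyclicEdges {d : Fin 3} {u : Fin 3 → ℤ} (h : UpToSign (Dominant d) u) :
    CyclicEdges u := by
  rcases h with h | h
  · exact h.cyclicEdges
  · exact cyclicEdges_neg.mp h.cyclicEdges

lemma Fin.eq_or_eq_add_one_or_eq_add_two (i m : Fin 3) : i = m ∨ i = m + 1 ∨ i = m + 2 := by
  revert i m
  decide

lemma max_lt_mul_sub {x y z : ℤ} (hx : 2 ≤ x) (hy : 2 ≤ y) (hz : z < max x y) :
    max x y < x * y - z := by
  rcases le_total x y with h | h
  · rw [max_eq_right h] at *; nlinarith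
  · rw [max_eq_left h] at *; nlinarith

section EdgeMut
variable {k : Fin 3} {a : Fin 3 → ℤ}

lemma OddEdge.edgeMut_self (h : OddEdge k a) : OddEdge (k + 2) (edgeMut k a) := by
  have h2 := h.2 (k + 2) (by simp)
  have hz : mutTerm (a k) (a (k + 2)) = 0 := mutTerm_of_nonpos (by nlinarith [h.1])
  refine ⟨by rw [edgeMut_apply_add_two]; linarith, fun i hi => ?_⟩
  obtain rfl | rfl | rfl := Fin.eq_or_eq_add_one_or_eq_add_two i k
  · rw [edgeMut_apply_self]; linarith [h.1]
  · rw [edgeMut_apply_add_one, hz, sub_zero]; exact h.2 _ (by simp)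
  · exact absurd rfl hi

lemma OddEdge.edgeMut_of_add_two (h : OddEdge (k + 2) a) : OddEdge k (edgeMut k a) := by
  have h0 := h.2 k (by simp)
  have hz : mutTerm (a k) (a (k + 2)) = 0 := mutTerm_of_nonpos (by nlinarith [h.1])
  refine ⟨by rw [edgeMut_apply_self]; linarith, fun i hi => ?_⟩
  obtain rfl | rfl | rfl := Fin.eq_or_eq_add_one_or_eq_add_two i k
  · exact absurd rfl hi
  · rw [edgeMut_apply_add_one, hz, sub_zero]; exact h.2 _ (by simp)
  · rw [edgeMut_apply_add_two]; linarith [h.1]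

lemma dominant_neg_edgeMut (hk : 2 ≤ a k) (hk' : 2 ≤ a (k + 2))
    (hmax : max (a k) (a (k + 2)) < a k * a (k + 2) - a (k + 1)) :
    Dominant (k + 1) (-edgeMut k a) := by
  have hb : (-edgeMut k a) (k + 1) = a k * a (k + 2) - a (k + 1) := by
    rw [Pi.neg_apply, edgeMut_apply_add_one, mutTerm_of_pos (by omega) (by omega)]
    ring
  have hrest : ∀ i ≠ k + 1,
      (-edgeMut k a) i = a i ∧ 2 ≤ a i ∧ a i ≤ max (a k) (a (k + 2)) := by
    intro i hi
    refine ⟨by rw [Pi.neg_apply, edgeMut_apply_of_ne _ hi, neg_neg], ?_⟩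
    obtain rfl | rfl | rfl := Fin.eq_or_eq_add_one_or_eq_add_two i k
    · exact ⟨hk, le_max_left _ _⟩
    · exact absurd rfl hi
    · exact ⟨hk', le_max_right _ _⟩
  refine ⟨fun i => ?_, fun i hi => ?_⟩
  · by_cases hi : i = k + 1
    · rw [hi, hb]
      linarith [le_max_left (a k) (a (k + 2))]
    · rw [(hrest i hi).1]
      exact (hrest i hi).2.1
  · rw [(hrest i hi).1, hb]
    linarith [(hrest i hi).2.2]

lemma OddEdge.edgeMut_of_add_one (h : OddEdge (k + 1) a) :
    UpToSign (Dominant (k + 1)) (edgeMut k a) := by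
  have hk := h.2 k (by simp)
  have hk' := h.2 (k + 2) (by simp)
  refine Or.inr (dominant_neg_edgeMut hk hk' (max_lt_mul_sub hk hk' ?_))
  linarith [h.1, le_max_left (a k) (a (k + 2))]

lemma Dominant.edgeMut_of_ne {d : Fin 3} (h : Dominant d a) (hk : k + 1 ≠ d) :
    UpToSign (Dominant (k + 1)) (edgeMut k a) := by
  have hz : a (k + 1) < max (a k) (a (k + 2)) := by
    obtain rfl | rfl | rfl := Fin.eq_or_eq_add_one_or_eq_add_two d k
    · exact lt_max_of_lt_left (h.2 _ hk)
    · exact absurd rfl hk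
    · exact lt_max_of_lt_right (h.2 _ hk)
  exact Or.inr (dominant_neg_edgeMut (h.1 k) (h.1 _) (max_lt_mul_sub (h.1 k) (h.1 _) hz))

end EdgeMut

section Words

open Fin.NatCast

def IsForward (w : List (Fin 3)) : Prop := ∀ t < w.length, w.getD t 0 = (t : Fin 3)

def IsBackward (w : List (Fin 3)) : Prop := ∀ t < w.length, w.getD t 0 = -((t : Fin 3) + 1)

lemma acyclic_iff {w : List (Fin 3)} : Acyclic w ↔ IsForward w ∨ IsBackward w := Iff.rfl

lemma List.forall_getD_concat {α : Type*} (w : List α) (j d : α) (f : ℕ → α) :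
    (∀ t < (w ++ [j]).length, (w ++ [j]).getD t d = f t) ↔
      (∀ t < w.length, w.getD t d = f t) ∧ j = f w.length := by
  simp only [List.length_append, List.length_singleton, Nat.lt_succ_iff, le_iff_lt_or_eq,
    or_imp, forall_and, forall_eq]
  refine and_congr (forall₂_congr fun t ht => ?_) ?_
  · rw [List.getD_append _ _ _ _ ht]
  · rw [List.getD_append_right _ _ _ _ le_rfl, Nat.sub_self]
    rfl

variable {w : List (Fin 3)} {i j : Fin 3}

lemma isForward_concat_concat :
    IsForward (w ++ [i] ++ [j]) ↔ IsForward (w ++ [i]) ∧ j = i + 1 := by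
  rw [IsForward, List.forall_getD_concat, ← IsForward]
  refine and_congr_right fun h => ?_
  obtain ⟨-, rfl⟩ := (List.forall_getD_concat w i 0 _).mp h
  simp

lemma isBackward_concat_concat :
    IsBackward (w ++ [i] ++ [j]) ↔ IsBackward (w ++ [i]) ∧ j = i + 2 := by
  rw [IsBackward, List.forall_getD_concat, ← IsBackward]
  refine and_congr_right fun h => ?_
  obtain ⟨-, rfl⟩ := (List.forall_getD_concat w i 0 _).mp h
  simp only [List.length_append, List.length_singleton, Nat.cast_succ]
  rw [show ∀ r : Fin 3, -(r + 1 + 1) = -(r + 1) + 2 by decide]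

-- `i` is the last letter of `w` and `u` the edge weights of `B(w)`.
def MutationInvariant (w : List (Fin 3)) (i : Fin 3) (u : Fin 3 → ℤ) : Prop :=
  (IsForward w → UpToSign (OddEdge i) u) ∧ (IsBackward w → UpToSign (OddEdge (i + 2)) u) ∧
    (¬ Acyclic w → UpToSign (Dominant (i + 1)) u)

lemma mutationInvariant_singleton {u : Fin 3 → ℤ} (h : OddEdge 2 u) (i : Fin 3) :
    MutationInvariant [i] i (edgeMut i u) := by
  fin_cases i
  · exact ⟨fun _ => Or.inl (OddEdge.edgeMut_of_add_two h),
      fun hB => absurd (hB 0 Nat.one_pos) (by decide), fun hA => absurd (Or.inl (by decide)) hA⟩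
  · exact ⟨fun hF => absurd (hF 0 Nat.one_pos) (by decide),
      fun hB => absurd (hB 0 Nat.one_pos) (by decide), fun _ => OddEdge.edgeMut_of_add_one h⟩
  · exact ⟨fun hF => absurd (hF 0 Nat.one_pos) (by decide), fun _ => Or.inl h.edgeMut_self,
      fun hA => absurd (Or.inr (by decide)) hA⟩

lemma MutationInvariant.concat {u : Fin 3 → ℤ} (h : MutationInvariant (w ++ [i]) i u)
    (hij : i ≠ j) :
    MutationInvariant (w ++ [i] ++ [j]) j (edgeMut j u) := by
  refine ⟨fun hF => ?_, fun hB => ?_, fun hA => ?_⟩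
  · obtain ⟨hF', rfl⟩ := isForward_concat_concat.mp hF
    refine (h.1 hF').edgeMut fun a ha => Or.inl (OddEdge.edgeMut_of_add_two ?_)
    rwa [show i + 1 + 2 = i by simp [add_assoc]]
  · obtain ⟨hB', rfl⟩ := isBackward_concat_concat.mp hB
    exact (h.2.1 hB').edgeMut fun a ha => Or.inl ha.edgeMut_self
  rw [acyclic_iff, isForward_concat_concat, isBackward_concat_concat] at hA
  by_cases hw : Acyclic (w ++ [i])
  · obtain rfl | rfl | rfl := Fin.eq_or_eq_add_one_or_eq_add_two j i
    · exact absurd rfl hij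
    · have hB : IsBackward (w ++ [i]) := hw.resolve_left fun hF => hA (Or.inl ⟨hF, rfl⟩)
      refine (h.2.1 hB).edgeMut fun a ha => OddEdge.edgeMut_of_add_one ?_
      rwa [show i + 1 + 1 = i + 2 by simp [add_assoc]]
    · have hF : IsForward (w ++ [i]) := hw.resolve_right fun hB => hA (Or.inr ⟨hB, rfl⟩)
      refine (h.1 hF).edgeMut fun a ha => OddEdge.edgeMut_of_add_one ?_
      rwa [show i + 2 + 1 = i by simp [add_assoc]]
  · exact (h.2.2 hw).edgeMut fun a ha => ha.edgeMut_of_ne (by simpa using hij.symm)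

lemma mutationInvariant {u : Fin 3 → ℤ} (h : OddEdge 2 u) (w : List (Fin 3)) (i : Fin 3)
    (hw : (w ++ [i]).IsChain (· ≠ ·)) :
    MutationInvariant (w ++ [i]) i ((w ++ [i]).foldl (fun u k => edgeMut k u) u) := by
  induction w using List.reverseRecOn generalizing i with
  | nil => exact mutationInvariant_singleton h i
  | append_singleton w j ih =>
    obtain ⟨hw', -, hji⟩ := List.isChain_append.mp hw
    rw [List.foldl_append, List.foldl_cons, List.foldl_nil]
    exact (ih j hw').concat (hji j (by simp) i rfl)

lemma cyclicEdges_foldl_edgeMut_iff {u : Fin 3 → ℤ} (h : OddEdge 2 u)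
    (hw : w.IsChain (· ≠ ·)) :
    CyclicEdges (w.foldl (fun u k => edgeMut k u) u) ↔ ¬ Acyclic w := by
  rcases w.eq_nil_or_concat with rfl | ⟨w, i, rfl⟩
  · exact iff_of_false h.not_cyclicEdges (not_not.mpr (Or.inl nofun))
  rw [List.concat_eq_append] at hw ⊢
  have hinv := mutationInvariant h w i hw
  by_cases hA : Acyclic (w ++ [i])
  · refine iff_of_false ?_ (not_not.mpr hA)
    rcases hA with hF | hB
    · exact (hinv.1 hF).not_cyclicEdges
    · exact (hinv.2.1 hB).not_cyclicEdges
  · exact iff_of_true (hinv.2.2 hA).cyclicEdges hA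

end Words

theorem stmt17 (c12 c13 c23 : ℤ) (h12 : 2 ≤ c12) (h13 : 2 ≤ c13) (h23 : 2 ≤ c23)
    (w : List (Fin 3)) (hw : w.Chain' (· ≠ ·)) :
    (¬ (0 < BW c12 c13 c23 w 0 1 ∧ 0 < BW c12 c13 c23 w 1 2 ∧ 0 < -BW c12 c13 c23 w 0 2) ∧
      ¬ (BW c12 c13 c23 w 0 1 < 0 ∧ BW c12 c13 c23 w 1 2 < 0 ∧ -BW c12 c13 c23 w 0 2 < 0)) ↔
    Acyclic w := by
  have h0 : OddEdge 2 ![c12, c23, -c13] := by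
    refine ⟨by simpa using h13, fun i hi => ?_⟩
    fin_cases i
    exacts [h12, h23, absurd rfl hi]
  rw [← not_or, ← not_iff_not, not_not, ← cyclicEdges_foldl_edgeMut_iff h0 hw, BW_eq_ofEdges]
  simp [ofEdges, CyclicEdges, Fin.forall_fin_succ]

end
end
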